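/- arXiv:2212.11934 — 2 statements merged into one kernel-verified Lean document; each statement's English description precedes it below -/
import Mathlib

section
/- Let S be a real m×n matrix and suppose ψ₁, …, ψ_n form an orthonormal basis of ℝⁿ consisting of eigenvectors of Sᵀ S, with (Sᵀ S) ψ_i = σ_i² ψ_i where σ₁ ≥ σ₂ ≥ … ≥ σ_n ≥ 0. Fix P with 1 ≤ P ≤ n and σ_P > 0, set ζ_j := σ_j⁻¹ • (S ψ_j) for j = 1, …, P, and let Π be the orthogonal projection of ℝᵐ onto span{ζ₁, …, ζ_P}. Denoting by s_j ∈ ℝᵐ the j-th column of S (j = 1, …, n), one has ∑_{j=1}^{n} ‖s_j − Π s_j‖² = ∑_{i=P+1}^{n} σ_i². -/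
/-!
`∑ⱼ ‖sⱼ - Π sⱼ‖²` is the squared Hilbert–Schmidt norm of `(1 - Π) S`, computed in the standard
basis of `ℝⁿ`; being a trace, it may as well be computed in the eigenbasis `ψ`. The vectors
`S ψᵢ` are pairwise orthogonal with `‖S ψᵢ‖² = σᵢ²`. For `i < P`, `S ψᵢ = σᵢ ζᵢ` lies in the POD
subspace and is annihilated by `1 - Π`; for `i ≥ P` it is orthogonal to every `ζₖ`, hence to the
POD subspace, and is left unchanged. What remains is `∑_{i ≥ P} σᵢ²`.
-/

open Matrix
open scoped InnerProductSpace

theorem Submodule.sum_norm_sq_sub_starProjection {𝕜 E ι : Type*} [RCLike 𝕜]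
    [NormedAddCommGroup E] [InnerProductSpace 𝕜 E] [Fintype ι]
    (K : Submodule 𝕜 E) [K.HasOrthogonalProjection] (v : ι → E) (p : ι → Prop) [DecidablePred p]
    (hmem : ∀ i, ¬ p i → v i ∈ K) (hperp : ∀ i, p i → v i ∈ Kᗮ) :
    ∑ i, ‖v i - K.starProjection (v i)‖ ^ 2 = ∑ i ∈ Finset.univ.filter p, ‖v i‖ ^ 2 := by
  rw [Finset.sum_filter]
  refine Finset.sum_congr rfl fun i _ => ?_
  split_ifs with hi
  · rw [K.starProjection_apply_eq_zero_iff.mpr (hperp i hi), sub_zero]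
  · rw [K.starProjection_eq_self_iff.mpr (hmem i hi), sub_self, norm_zero, zero_pow two_ne_zero]

theorem Submodule.mem_orthogonal_span_iff {𝕜 E : Type*} [RCLike 𝕜] [NormedAddCommGroup E]
    [InnerProductSpace 𝕜 E] {s : Set E} {v : E} :
    v ∈ (span 𝕜 s)ᗮ ↔ ∀ u ∈ s, ⟪u, v⟫_𝕜 = 0 := by
  rw [← span_singleton_le_iff_mem, ← isOrtho_iff_le, isOrtho_comm, isOrtho_span]
  simp

section HilbertSchmidt

variable {𝕜 E F : Type*} [RCLike 𝕜]
  [NormedAddCommGroup E] [InnerProductSpace 𝕜 E] [FiniteDimensional 𝕜 E]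
  [NormedAddCommGroup F] [InnerProductSpace 𝕜 F] [FiniteDimensional 𝕜 F]

theorem LinearMap.ofReal_sum_norm_sq_apply_eq_trace {ι : Type*} [Fintype ι] (A : E →ₗ[𝕜] F)
    (b : OrthonormalBasis ι 𝕜 E) :
    ((∑ i, ‖A (b i)‖ ^ 2 : ℝ) : 𝕜) = (A.adjoint ∘ₗ A).trace 𝕜 E := by
  rw [LinearMap.trace_eq_sum_inner _ b]
  push_cast
  refine Finset.sum_congr rfl fun i _ => ?_
  rw [Function.comp_apply, LinearMap.adjoint_inner_right, inner_self_eq_norm_sq_to_K]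

theorem LinearMap.sum_norm_sq_apply_orthonormalBasis_eq {ι κ : Type*} [Fintype ι] [Fintype κ]
    (A : E →ₗ[𝕜] F) (b : OrthonormalBasis ι 𝕜 E) (c : OrthonormalBasis κ 𝕜 E) :
    ∑ i, ‖A (b i)‖ ^ 2 = ∑ k, ‖A (c k)‖ ^ 2 := by
  exact_mod_cast (A.ofReal_sum_norm_sq_apply_eq_trace b).trans
    (A.ofReal_sum_norm_sq_apply_eq_trace c).symm

theorem Submodule.sum_norm_sq_sub_starProjection_apply_orthonormalBasis
    {ι κ : Type*} [Fintype ι] [Fintype κ] (K : Submodule 𝕜 F) (T : E →ₗ[𝕜] F)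
    (b : OrthonormalBasis ι 𝕜 E) (c : OrthonormalBasis κ 𝕜 E) (p : ι → Prop) [DecidablePred p]
    (hmem : ∀ i, ¬ p i → T (b i) ∈ K) (hperp : ∀ i, p i → T (b i) ∈ Kᗮ) :
    ∑ k, ‖T (c k) - K.starProjection (T (c k))‖ ^ 2 =
      ∑ i ∈ Finset.univ.filter p, ‖T (b i)‖ ^ 2 := by
  have hbasis := LinearMap.sum_norm_sq_apply_orthonormalBasis_eq
    ((LinearMap.id - K.starProjection.toLinearMap) ∘ₗ T) c b
  simp only [LinearMap.comp_apply, LinearMap.sub_apply, LinearMap.id_apply,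
    ContinuousLinearMap.coe_coe] at hbasis
  rw [hbasis, K.sum_norm_sq_sub_starProjection _ p hmem hperp]

end HilbertSchmidt

theorem Matrix.toEuclideanLin_basisFun {𝕜 m n : Type*} [RCLike 𝕜] [Fintype n] [DecidableEq n]
    (S : Matrix m n 𝕜) (j : n) :
    S.toEuclideanLin (EuclideanSpace.basisFun n 𝕜 j) = WithLp.toLp 2 (fun i => S i j) := by
  rw [EuclideanSpace.basisFun_apply]
  ext i
  simp [toLpLin_apply]

theorem Matrix.inner_toLp_mulVec_of_mulVec_eq_smul {𝕜 m n : Type*} [RCLike 𝕜] [Fintype m]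
    [DecidableEq m] [Fintype n] [DecidableEq n] (S : Matrix m n 𝕜) (x : n → 𝕜) {y : n → 𝕜}
    {μ : 𝕜} (hy : (Sᴴ * S) *ᵥ y = μ • y) :
    ⟪WithLp.toLp 2 (S *ᵥ x), WithLp.toLp 2 (S *ᵥ y)⟫_𝕜 =
      μ * ⟪WithLp.toLp 2 x, WithLp.toLp 2 y⟫_𝕜 := by
  have hadj := LinearMap.adjoint_inner_right S.toEuclideanLin (WithLp.toLp 2 x)
    (S.toEuclideanLin (WithLp.toLp 2 y))
  rw [← Matrix.toEuclideanLin_conjTranspose_eq_adjoint] at hadj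
  simp only [toLpLin_toLp, toLin'_apply, mulVec_mulVec, hy] at hadj
  rw [← hadj, WithLp.toLp_smul, inner_smul_right]

theorem pod_projection_error_identity_general
    (m n : ℕ) (S : Matrix (Fin m) (Fin n) ℝ)
    (ψ : Fin n → (Fin n → ℝ)) (σ : Fin n → ℝ)
    (hON : Orthonormal ℝ
      (fun i => (EuclideanSpace.equiv (Fin n) ℝ).symm (ψ i)))
    (heig : ∀ i, (Sᵀ * S).mulVec (ψ i) = (σ i) ^ 2 • ψ i)
    (P : ℕ)
    (hσP : ∀ i : Fin n, (i : ℕ) < P → 0 < σ i)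
    (ζ : Fin n → EuclideanSpace ℝ (Fin m))
    (hζ : ∀ i : Fin n, (i : ℕ) < P →
      ζ i = (σ i)⁻¹ • (EuclideanSpace.equiv (Fin m) ℝ).symm (S.mulVec (ψ i)))
    (K : Submodule ℝ (EuclideanSpace ℝ (Fin m)))
    (hK : K = Submodule.span ℝ (ζ '' {i : Fin n | (i : ℕ) < P})) :
    ∑ j : Fin n,
        ‖(EuclideanSpace.equiv (Fin m) ℝ).symm (fun i => S i j) -
          (K.orthogonalProjectionOnto
            ((EuclideanSpace.equiv (Fin m) ℝ).symm (fun i => S i j)) :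
              EuclideanSpace ℝ (Fin m))‖ ^ 2 =
      ∑ i ∈ Finset.univ.filter (fun i : Fin n => P ≤ (i : ℕ)), (σ i) ^ 2 := by
  let B := OrthonormalBasis.mk hON
    (hON.linearIndependent.span_eq_top_of_card_eq_finrank' (by simp)).ge
  let v : Fin n → EuclideanSpace ℝ (Fin m) := fun i => S.toEuclideanLin (B i)
  have hv : ∀ i, v i = WithLp.toLp 2 (S *ᵥ ψ i) := fun i => by simp [v, B]
  have hv_inner : ∀ i j, ⟪v i, v j⟫_ℝ = if i = j then σ j ^ 2 else 0 := fun i j => by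
    have hψ : ⟪WithLp.toLp 2 (ψ i), WithLp.toLp 2 (ψ j)⟫_ℝ = if i = j then 1 else 0 :=
      orthonormal_iff_ite.mp hON i j
    have hSψ : (Sᴴ * S) *ᵥ ψ j = σ j ^ 2 • ψ j := by
      rw [conjTranspose_eq_transpose_of_trivial, heig]
    rw [hv, hv, S.inner_toLp_mulVec_of_mulVec_eq_smul _ hSψ, hψ, mul_ite, mul_one, mul_zero]
  have hζv : ∀ k : Fin n, (k : ℕ) < P → ζ k = (σ k)⁻¹ • v k := fun k hk => by
    rw [hv, hζ k hk]
    rfl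
  have hmem : ∀ i : Fin n, ¬ P ≤ (i : ℕ) → v i ∈ K := fun i hi => by
    have hi := not_le.mp hi
    rw [hK, ← smul_inv_smul₀ (hσP i hi).ne' (v i), ← hζv i hi]
    exact Submodule.smul_mem _ _ (Submodule.subset_span (Set.mem_image_of_mem ζ hi))
  have hperp : ∀ i : Fin n, P ≤ (i : ℕ) → v i ∈ Kᗮ := fun i hi => by
    rw [hK, Submodule.mem_orthogonal_span_iff]
    rintro _ ⟨k, hk, rfl⟩
    rw [hζv k hk, real_inner_smul_left, hv_inner,
      if_neg (Fin.lt_def.mpr (lt_of_lt_of_le hk hi)).ne, mul_zero]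
  calc _ = ∑ j, ‖S.toEuclideanLin (EuclideanSpace.basisFun (Fin n) ℝ j) -
        K.starProjection (S.toEuclideanLin (EuclideanSpace.basisFun (Fin n) ℝ j))‖ ^ 2 := by
        simp only [toEuclideanLin_basisFun]
        rfl
    _ = ∑ i ∈ Finset.univ.filter (fun i : Fin n => P ≤ (i : ℕ)), ‖v i‖ ^ 2 :=
        K.sum_norm_sq_sub_starProjection_apply_orthonormalBasis _ B _ _ hmem hperp
    _ = _ := Finset.sum_congr rfl fun i _ => by
        rw [← real_inner_self_eq_norm_sq, hv_inner, if_pos rfl]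

/-- **POD projection-error identity.**
Let `S ∈ ℝ^{m×n}` and let `ψ 0, …, ψ (n-1)` be an orthonormal basis of `ℝⁿ`
of eigenvectors of `Sᵀ S`, with `(Sᵀ S) (ψ i) = (σ i)² (ψ i)` and
`σ 0 ≥ σ 1 ≥ … ≥ σ (n-1) ≥ 0`.  Fix `P` with `1 ≤ P ≤ n` such that the first
`P` singular values are positive, set `ζ i := (σ i)⁻¹ • S (ψ i)` for `i < P`,
and let `Π` be the orthogonal projection of `ℝᵐ` onto `span {ζ i : i < P}`.
Then the total squared Euclidean projection error of the columns of `S`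
equals the sum of the neglected squared singular values:
`∑ⱼ ‖sⱼ − Π sⱼ‖² = ∑_{i ≥ P} (σ i)²`. -/
theorem pod_projection_error_identity
    (m n : ℕ) (S : Matrix (Fin m) (Fin n) ℝ)
    (ψ : Fin n → (Fin n → ℝ)) (σ : Fin n → ℝ)
    (hON : Orthonormal ℝ
      (fun i => (EuclideanSpace.equiv (Fin n) ℝ).symm (ψ i)))
    (heig : ∀ i, (Sᵀ * S).mulVec (ψ i) = (σ i) ^ 2 • ψ i)
    (hsorted : ∀ i j : Fin n, i ≤ j → σ j ≤ σ i)
    (hnonneg : ∀ i, 0 ≤ σ i)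
    (P : ℕ) (hP1 : 1 ≤ P) (hPn : P ≤ n)
    (hσP : ∀ i : Fin n, (i : ℕ) < P → 0 < σ i)
    (ζ : Fin n → EuclideanSpace ℝ (Fin m))
    (hζ : ∀ i : Fin n, (i : ℕ) < P →
      ζ i = (σ i)⁻¹ • (EuclideanSpace.equiv (Fin m) ℝ).symm (S.mulVec (ψ i)))
    (K : Submodule ℝ (EuclideanSpace ℝ (Fin m)))
    (hK : K = Submodule.span ℝ (ζ '' {i : Fin n | (i : ℕ) < P})) :
    ∑ j : Fin n,
        ‖(EuclideanSpace.equiv (Fin m) ℝ).symm (fun i => S i j) -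
          (K.orthogonalProjectionOnto
            ((EuclideanSpace.equiv (Fin m) ℝ).symm (fun i => S i j)) :
              EuclideanSpace ℝ (Fin m))‖ ^ 2 =
      ∑ i ∈ Finset.univ.filter (fun i : Fin n => P ≤ (i : ℕ)), (σ i) ^ 2 :=
  pod_projection_error_identity_general m n S ψ σ hON heig P hσP ζ hζ K hK
end

section
/- Let S be a real m×n matrix and suppose ψ₁, …, ψ_n form an orthonormal eigenbasis of ℝⁿ for Sᵀ S with eigenvalues σ₁² ≥ … ≥ σ_n² ≥ 0, not all zero. Fix P with 1 ≤ P ≤ n and σ_P > 0, set ζ_j := σ_j⁻¹ • (S ψ_j) for j ≤ P, and let Π be the orthogonal projection of ℝᵐ onto span{ζ₁, …, ζ_P}. If ε ≥ 0 satisfies 1 − (∑_{i=1}^{P} σ_i²)/(∑_{i=1}^{n} σ_i²) ≤ ε, then ∑_{j=1}^{n} ‖s_j − Π s_j‖² ≤ ε · ∑_{j=1}^{n} ‖s_j‖², where s_j denotes the j-th column of S. -/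
/-!
For a linear map `T` between finite-dimensional inner product spaces, `∑ᵢ ‖T bᵢ‖²` equals
`re (trace (T† T))` for every orthonormal basis `b`, so it does not depend on `b`. Applied to
`T = S` and `T = (1 - Π) S`, this replaces the columns `sⱼ = S eⱼ` by the vectors `S ψᵢ`. These
are pairwise orthogonal with `‖S ψᵢ‖² = σᵢ²`; those with `i < P` span the range of `Π` and are
fixed by it, the others are orthogonal to it. Hence the residual is `∑_{i ≥ P} σᵢ²`, against the
total `∑ᵢ σᵢ²`.
-/

open Matrix Finset

namespace LinearMap

variable {𝕜 E F ι : Type*} [RCLike 𝕜]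
  [NormedAddCommGroup E] [InnerProductSpace 𝕜 E] [FiniteDimensional 𝕜 E]
  [NormedAddCommGroup F] [InnerProductSpace 𝕜 F] [FiniteDimensional 𝕜 F]

theorem sum_norm_sq_apply_eq_re_trace [Fintype ι] (T : E →ₗ[𝕜] F) (b : OrthonormalBasis ι 𝕜 E) :
    ∑ i, ‖T (b i)‖ ^ 2 = RCLike.re ((adjoint T ∘ₗ T).trace 𝕜 E) := by
  rw [trace_eq_sum_inner _ b, map_sum]
  refine Fintype.sum_congr _ _ fun i => ?_
  rw [comp_apply, adjoint_inner_right, inner_self_eq_norm_sq]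

theorem sum_norm_sq_apply_orthonormalBasis_eq_s5 {κ : Type*} [Fintype ι] [Fintype κ] (T : E →ₗ[𝕜] F)
    (b : OrthonormalBasis ι 𝕜 E) (b' : OrthonormalBasis κ 𝕜 E) :
    ∑ i, ‖T (b i)‖ ^ 2 = ∑ k, ‖T (b' k)‖ ^ 2 := by
  rw [sum_norm_sq_apply_eq_re_trace T b, sum_norm_sq_apply_eq_re_trace T b']

theorem inner_apply_apply_of_adjoint_comp_apply_eq_smul [DecidableEq ι] (T : E →ₗ[𝕜] F)
    {v : ι → E} (hv : Orthonormal 𝕜 v) {μ : ι → 𝕜} (hμ : ∀ i, (adjoint T ∘ₗ T) (v i) = μ i • v i)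
    (i k : ι) : inner 𝕜 (T (v i)) (T (v k)) = if i = k then μ k else 0 := by
  rw [← adjoint_inner_right, ← comp_apply, hμ, inner_smul_right, orthonormal_iff_ite.1 hv]
  split_ifs <;> simp

end LinearMap

namespace Matrix

variable {m n : Type*} [Fintype n] [DecidableEq n]

theorem sum_norm_sq_apply_col_eq {F : Type*} [NormedAddCommGroup F] [InnerProductSpace ℝ F]
    [FiniteDimensional ℝ F] (S : Matrix m n ℝ) (T : EuclideanSpace ℝ m →ₗ[ℝ] F)
    {ψ : n → n → ℝ} (hψ : Orthonormal ℝ fun i => (EuclideanSpace.equiv n ℝ).symm (ψ i)) :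
    ∑ j, ‖T ((EuclideanSpace.equiv m ℝ).symm fun i => S i j)‖ ^ 2
      = ∑ i, ‖T ((EuclideanSpace.equiv m ℝ).symm (S *ᵥ ψ i))‖ ^ 2 := by
  have := (T ∘ₗ toEuclideanLin S).sum_norm_sq_apply_orthonormalBasis_eq_s5
    (EuclideanSpace.basisFun n ℝ)
    (OrthonormalBasis.mk hψ (hψ.linearIndependent.span_eq_top_of_card_eq_finrank' (by simp)).ge)
  convert this using 4 with j _ i
  · rw [LinearMap.comp_apply]
    congr 1
    ext k
    simp [mulVec, dotProduct, Pi.single_apply]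
  · simp

theorem inner_mulVec_mulVec_of_orthonormal_of_mulVec_eq_smul {ι : Type*} [Fintype m]
    [DecidableEq ι] (S : Matrix m n ℝ) {ψ : ι → n → ℝ}
    (hψ : Orthonormal ℝ fun i => (EuclideanSpace.equiv n ℝ).symm (ψ i))
    {μ : ι → ℝ} (hμ : ∀ i, (Sᵀ * S) *ᵥ ψ i = μ i • ψ i) (i k : ι) :
    inner ℝ ((EuclideanSpace.equiv m ℝ).symm (S *ᵥ ψ i))
      ((EuclideanSpace.equiv m ℝ).symm (S *ᵥ ψ k)) = if i = k then μ k else 0 := by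
  classical
  have hS (x : n → ℝ) : (EuclideanSpace.equiv m ℝ).symm (S *ᵥ x)
      = toEuclideanLin S ((EuclideanSpace.equiv n ℝ).symm x) := by simp
  rw [hS, hS]
  refine (toEuclideanLin S).inner_apply_apply_of_adjoint_comp_apply_eq_smul hψ (fun i => ?_) i k
  rw [LinearMap.comp_apply, ← hS, ← toEuclideanLin_conjTranspose_eq_adjoint,
    conjTranspose_eq_transpose_of_trivial]
  simp [mulVec_mulVec, hμ]

end Matrix

namespace Submodule

variable {𝕜 E ι : Type*} [RCLike 𝕜] [NormedAddCommGroup E] [InnerProductSpace 𝕜 E]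

theorem norm_sub_starProjection_apply_of_pairwise_inner_eq_zero {v : ι → E}
    (hv : Pairwise fun i k => inner 𝕜 (v i) (v k) = 0) {p : ι → Prop} [DecidablePred p]
    (K : Submodule 𝕜 E) [K.HasOrthogonalProjection] (hvK : ∀ i, p i → v i ∈ K)
    (hKv : K ≤ span 𝕜 (v '' {i | p i})) (i : ι) :
    ‖v i - K.starProjection (v i)‖ = if p i then 0 else ‖v i‖ := by
  split_ifs with hi
  · rw [starProjection_eq_self_iff.2 (hvK i hi), sub_self, norm_zero]
  · suffices v i ∈ Kᗮ by rw [(starProjection_apply_eq_zero_iff K).2 this, sub_zero]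
    refine orthogonal_le hKv (isOrtho_iff_le.1 ?_ (mem_span_singleton_self (v i)))
    rw [isOrtho_span]
    rintro _ rfl _ ⟨k, hk, rfl⟩
    exact hv (by rintro rfl; exact hi hk)

end Submodule

theorem Finset.sum_filter_not_le_of_one_sub_div_le {ι : Type*} (s : Finset ι) (p : ι → Prop)
    [DecidablePred p] {f : ι → ℝ} (hf : ∀ i ∈ s, 0 ≤ f i) {ε : ℝ}
    (h : 1 - (∑ i ∈ s with p i, f i) / ∑ i ∈ s, f i ≤ ε) :
    ∑ i ∈ s with ¬ p i, f i ≤ ε * ∑ i ∈ s, f i := by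
  rcases (sum_nonneg hf).eq_or_lt with hzero | hpos
  · rw [← hzero, mul_zero, hzero]
    exact sum_le_sum_of_subset_of_nonneg (filter_subset _ s) fun i hi _ => hf i hi
  · calc ∑ i ∈ s with ¬ p i, f i
          = (1 - (∑ i ∈ s with p i, f i) / ∑ i ∈ s, f i) * ∑ i ∈ s, f i := by
          rw [sub_mul, div_mul_cancel₀ _ hpos.ne', one_mul, ← sum_filter_add_sum_filter_not s p,
            add_sub_cancel_left]
      _ ≤ ε * ∑ i ∈ s, f i := by gcongr

theorem pod_truncation_criterion_general
    (m n : ℕ) (S : Matrix (Fin m) (Fin n) ℝ)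
    (ψ : Fin n → (Fin n → ℝ)) (σ : Fin n → ℝ)
    (hON : Orthonormal ℝ
      (fun i => (EuclideanSpace.equiv (Fin n) ℝ).symm (ψ i)))
    (heig : ∀ i, (Sᵀ * S).mulVec (ψ i) = (σ i) ^ 2 • ψ i)
    (P : ℕ)
    (hσP : ∀ i : Fin n, (i : ℕ) < P → 0 < σ i)
    (ζ : Fin n → EuclideanSpace ℝ (Fin m))
    (hζ : ∀ i : Fin n, (i : ℕ) < P →
      ζ i = (σ i)⁻¹ • (EuclideanSpace.equiv (Fin m) ℝ).symm (S.mulVec (ψ i)))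
    (K : Submodule ℝ (EuclideanSpace ℝ (Fin m)))
    (hK : K = Submodule.span ℝ (ζ '' {i : Fin n | (i : ℕ) < P}))
    (ε : ℝ)
    (hε : 1 - (∑ i ∈ Finset.univ.filter (fun i : Fin n => (i : ℕ) < P),
                (σ i) ^ 2) / (∑ i : Fin n, (σ i) ^ 2) ≤ ε) :
    ∑ j : Fin n,
        ‖(EuclideanSpace.equiv (Fin m) ℝ).symm (fun i => S i j) -
          (K.orthogonalProjectionOnto
            ((EuclideanSpace.equiv (Fin m) ℝ).symm (fun i => S i j)) :
              EuclideanSpace ℝ (Fin m))‖ ^ 2 ≤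
      ε * ∑ j : Fin n,
        ‖(EuclideanSpace.equiv (Fin m) ℝ).symm (fun i => S i j)‖ ^ 2 := by
  set v := fun i => (EuclideanSpace.equiv (Fin m) ℝ).symm (S *ᵥ ψ i)
  have hv := S.inner_mulVec_mulVec_of_orthonormal_of_mulVec_eq_smul hON heig
  have hnorm (i : Fin n) : ‖v i‖ ^ 2 = σ i ^ 2 := by
    rw [← real_inner_self_eq_norm_sq, hv, if_pos rfl]
  have hvK (i : Fin n) (hi : (i : ℕ) < P) : v i ∈ K := by
    rw [← smul_inv_smul₀ (hσP i hi).ne' (v i), ← hζ i hi, hK]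
    exact Submodule.smul_mem _ _ (Submodule.subset_span ⟨i, hi, rfl⟩)
  have hKv : K ≤ Submodule.span ℝ (v '' {i : Fin n | (i : ℕ) < P}) := by
    rw [hK, Submodule.span_le]
    rintro _ ⟨i, hi, rfl⟩
    rw [hζ i hi]
    exact Submodule.smul_mem _ _ (Submodule.subset_span ⟨i, hi, rfl⟩)
  have hres (i : Fin n) :
      ‖v i - K.starProjection (v i)‖ ^ 2 = if (i : ℕ) < P then 0 else σ i ^ 2 := by
    rw [K.norm_sub_starProjection_apply_of_pairwise_inner_eq_zero
      (fun i k hik => (hv i k).trans (if_neg hik)) hvK hKv, ← hnorm]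
    split_ifs
    exacts [zero_pow two_ne_zero, rfl]
  calc _ = ∑ i, ‖v i - K.starProjection (v i)‖ ^ 2 :=
        S.sum_norm_sq_apply_col_eq (LinearMap.id - K.starProjection.toLinearMap) hON
    _ = ∑ i ∈ univ.filter (fun i : Fin n => ¬ (i : ℕ) < P), σ i ^ 2 := by
        simp only [hres, sum_ite, sum_const_zero, zero_add]
    _ ≤ ε * ∑ i, σ i ^ 2 := sum_filter_not_le_of_one_sub_div_le _ _ (fun i _ => sq_nonneg _) hε
    _ = _ := by
        rw [← sum_congr rfl fun i _ => hnorm i]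
        exact congrArg _ (S.sum_norm_sq_apply_col_eq LinearMap.id hON).symm

/-- **POD truncation criterion.**
With `S ∈ ℝ^{m×n}`, an orthonormal eigenbasis `ψ` of `Sᵀ S` with eigenvalues
`σ 0 ² ≥ … ≥ σ (n-1) ² ≥ 0` not all zero, `1 ≤ P ≤ n` with positive leading
singular values, POD vectors `ζ i := (σ i)⁻¹ • S (ψ i)` for `i < P`, and `Π`
the orthogonal projection onto `span {ζ i : i < P}`: if `ε ≥ 0` satisfies
`1 − (∑_{i<P} σ i ²)/(∑ᵢ σ i ²) ≤ ε`, then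
`∑ⱼ ‖sⱼ − Π sⱼ‖² ≤ ε · ∑ⱼ ‖sⱼ‖²`, where `sⱼ` is the `j`-th column of `S`. -/
theorem pod_truncation_criterion
    (m n : ℕ) (S : Matrix (Fin m) (Fin n) ℝ)
    (ψ : Fin n → (Fin n → ℝ)) (σ : Fin n → ℝ)
    (hON : Orthonormal ℝ
      (fun i => (EuclideanSpace.equiv (Fin n) ℝ).symm (ψ i)))
    (heig : ∀ i, (Sᵀ * S).mulVec (ψ i) = (σ i) ^ 2 • ψ i)
    (hsorted : ∀ i j : Fin n, i ≤ j → σ j ≤ σ i)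
    (hnonneg : ∀ i, 0 ≤ σ i)
    (hnotall : ∃ i, σ i ≠ 0)
    (P : ℕ) (hP1 : 1 ≤ P) (hPn : P ≤ n)
    (hσP : ∀ i : Fin n, (i : ℕ) < P → 0 < σ i)
    (ζ : Fin n → EuclideanSpace ℝ (Fin m))
    (hζ : ∀ i : Fin n, (i : ℕ) < P →
      ζ i = (σ i)⁻¹ • (EuclideanSpace.equiv (Fin m) ℝ).symm (S.mulVec (ψ i)))
    (K : Submodule ℝ (EuclideanSpace ℝ (Fin m)))
    (hK : K = Submodule.span ℝ (ζ '' {i : Fin n | (i : ℕ) < P}))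
    (ε : ℝ) (hε0 : 0 ≤ ε)
    (hε : 1 - (∑ i ∈ Finset.univ.filter (fun i : Fin n => (i : ℕ) < P),
                (σ i) ^ 2) / (∑ i : Fin n, (σ i) ^ 2) ≤ ε) :
    ∑ j : Fin n,
        ‖(EuclideanSpace.equiv (Fin m) ℝ).symm (fun i => S i j) -
          (K.orthogonalProjectionOnto
            ((EuclideanSpace.equiv (Fin m) ℝ).symm (fun i => S i j)) :
              EuclideanSpace ℝ (Fin m))‖ ^ 2 ≤
      ε * ∑ j : Fin n,
        ‖(EuclideanSpace.equiv (Fin m) ℝ).symm (fun i => S i j)‖ ^ 2 :=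
  pod_truncation_criterion_general m n S ψ σ hON heig P hσP ζ hζ K hK ε hε
end
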